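/- Practical worst-case CVaR input-to-state stability of x_{t+1} = A x_t + D v_t + E w_t (explicit bound): assume spectral norm ‖A‖ < 1 and Σ_w positive semidefinite, and let P := Σ_{k=0}^∞ A^k E Σ_w Eᵀ (Aᵀ)^k. Then for all α₁ > 0, α₂ > 0, every initial state x₀, every sequence of inputs v₀, …, v_{t−1} ∈ ℝ^{n_v}, and every t ≥ 1: sup_{P ∈ M_t} CVaR_ε^P[ ‖A^t x₀ + G_t v̄_t + H_t w̄_t‖² ] ≤ (1+α₁²)·‖A‖^{2t}·‖x₀‖² + (1+1/α₁²)·(1+α₂²)·(‖D‖/(1−‖A‖))²·max_{0≤τ≤t−1}‖v_τ‖² + (1+1/α₁²)·(1+1/α₂²)·(1/ε)·Tr(P). In particular the system is practically worst-case CVaR input-to-state stable. -/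

import Mathlib

open MeasureTheory Matrix Kronecker

/-- Spectral norm (largest singular value) of a real matrix, as the operator norm of the
induced map between Euclidean spaces. -/
noncomputable def specNorm {m n : Type*} [Fintype m] [Fintype n] [DecidableEq n]
    (A : Matrix m n ℝ) : ℝ :=
  ‖LinearMap.toContinuousLinearMap (Matrix.toEuclideanLin A)‖

/-- Conditional value-at-risk at level `ε` of the loss `L` under the measure `P`:
`CVaR_ε^P[L] = inf_β ( β + (1/ε) E_P[max (L ξ - β) 0] )`. -/
noncomputable def CVaR {ι : Type*} [Fintype ι] (ε : ℝ)
    (P : Measure (EuclideanSpace ℝ ι)) (L : EuclideanSpace ℝ ι → ℝ) : ℝ :=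
  ⨅ β : ℝ, (β + ε⁻¹ * ∫ ξ, max (L ξ - β) 0 ∂P)

/-- The set `M(S)` of Borel probability measures with zero mean and covariance `S`. -/
def MomentSet {ι : Type*} [Fintype ι] (S : Matrix ι ι ℝ) :
    Set (Measure (EuclideanSpace ℝ ι)) :=
  {P | IsProbabilityMeasure P ∧
       (∀ i, Integrable (fun ξ => ξ i) P) ∧
       (∀ i, ∫ ξ, ξ i ∂P = 0) ∧
       (∀ i j, Integrable (fun ξ => ξ i * ξ j) P) ∧
       (∀ i j, ∫ ξ, ξ i * ξ j ∂P = S i j)}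

/-- Worst-case CVaR over the moment set `M(S)`. -/
noncomputable def wcCVaR {ι : Type*} [Fintype ι] (ε : ℝ) (S : Matrix ι ι ℝ)
    (L : EuclideanSpace ℝ ι → ℝ) : ℝ :=
  ⨆ P : MomentSet S, CVaR ε (P : Measure (EuclideanSpace ℝ ι)) L

/-- The block matrix `H_t = [A^(t-1) E, A^(t-2) E, ..., E]`, viewed as a matrix acting on the
stacked disturbance vector `w̄_t = (w_0, ..., w_(t-1))` (indexed by `Fin t × Fin nw`),
so that `H_t w̄_t = Σ_k A^(t-1-k) E w_k`. -/
noncomputable def Hmat {nx nw : ℕ} (A : Matrix (Fin nx) (Fin nx) ℝ)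
    (E : Matrix (Fin nx) (Fin nw) ℝ) (t : ℕ) :
    Matrix (Fin nx) (Fin t × Fin nw) ℝ :=
  Matrix.of fun i p => (A ^ (t - 1 - (p.1 : ℕ)) * E) i p.2

/-!
Split the state into the free response `A^t x₀`, the input response `Σ_k A^k D v_{t-1-k}` and
the noise response `H_t w̄`. Two weighted Young inequalities bound `‖x_t‖²` pointwise by a constant
`c` plus `K ‖H_t w̄‖²`, so taking `β = c` in the infimum defining CVaR gives
`CVaR ≤ c + K ε⁻¹ E‖H_t w̄‖²` for every admissible distribution. The second moment only sees the
covariance: `E‖H_t w̄‖² = tr (H_t (I_t ⊗ Σ_w) H_tᵀ) = Σ_{k<t} tr (A^k E Σ_w Eᵀ Aᵀ^k) ≤ tr P`.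
The input response is bounded through the geometric series `‖D‖ Σ_k ‖A‖^k max_τ ‖v_τ‖`.
-/

open scoped Matrix.Norms.L2Operator

section SpecNorm

variable {l m n : Type*} [Fintype l] [Fintype m] [Fintype n] [DecidableEq n]

lemma specNorm_eq_norm (A : Matrix m n ℝ) : specNorm A = ‖A‖ := rfl

lemma specNorm_nonneg (A : Matrix m n ℝ) : 0 ≤ specNorm A := norm_nonneg A

lemma norm_toEuclideanLin_le (A : Matrix m n ℝ) (x : EuclideanSpace ℝ n) :
    ‖toEuclideanLin A x‖ ≤ specNorm A * ‖x‖ :=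
  (LinearMap.toContinuousLinearMap (toEuclideanLin A)).le_opNorm x

lemma specNorm_mul_le [DecidableEq m] (A : Matrix l m ℝ) (B : Matrix m n ℝ) :
    specNorm (A * B) ≤ specNorm A * specNorm B :=
  l2_opNorm_mul A B

lemma specNorm_transpose [DecidableEq m] (A : Matrix m n ℝ) : specNorm Aᵀ = specNorm A := by
  rw [← conjTranspose_eq_transpose_of_trivial]
  exact l2_opNorm_conjTranspose A

lemma specNorm_pow_le (A : Matrix n n ℝ) (k : ℕ) : specNorm (A ^ k) ≤ specNorm A ^ k := by
  rcases Nat.eq_zero_or_pos k with rfl | hk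
  · rw [pow_zero, pow_zero, specNorm_eq_norm, cstar_norm_def, map_one]
    exact ContinuousLinearMap.norm_id_le
  · exact norm_pow_le' A hk

lemma norm_toEuclideanLin_pow_sq_le (A : Matrix n n ℝ) (x : EuclideanSpace ℝ n) (t : ℕ) :
    ‖toEuclideanLin (A ^ t) x‖ ^ 2 ≤ specNorm A ^ (2 * t) * ‖x‖ ^ 2 := by
  rw [pow_mul', ← mul_pow]
  gcongr
  exact (norm_toEuclideanLin_le _ _).trans (by gcongr; exact specNorm_pow_le A t)

end SpecNorm

section Lyapunov

variable {n : Type*} [Fintype n] [DecidableEq n] {A : Matrix n n ℝ}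

lemma specNorm_pow_mul_mul_transpose_pow_le (A M : Matrix n n ℝ) (k : ℕ) :
    specNorm (A ^ k * M * Aᵀ ^ k) ≤ (specNorm A ^ 2) ^ k * specNorm M := by
  have hA := specNorm_pow_le A k
  have hAt : specNorm (Aᵀ ^ k) ≤ specNorm A ^ k := by
    rwa [← transpose_pow, specNorm_transpose]
  calc specNorm (A ^ k * M * Aᵀ ^ k)
      ≤ specNorm (A ^ k) * specNorm M * specNorm (Aᵀ ^ k) :=
        (specNorm_mul_le _ _).trans <|
          mul_le_mul_of_nonneg_right (specNorm_mul_le _ _) (specNorm_nonneg _)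
    _ ≤ specNorm A ^ k * specNorm M * specNorm A ^ k := by
        gcongr <;> apply_rules [specNorm_nonneg, mul_nonneg, pow_nonneg]
    _ = (specNorm A ^ 2) ^ k * specNorm M := by ring

lemma summable_pow_mul_mul_transpose_pow (hA : specNorm A < 1) (M : Matrix n n ℝ) :
    Summable fun k : ℕ => A ^ k * M * Aᵀ ^ k := by
  have hq : specNorm A ^ 2 < 1 := pow_lt_one₀ (specNorm_nonneg A) hA two_ne_zero
  exact Summable.of_norm_bounded
    ((summable_geometric_of_lt_one (sq_nonneg _) hq).mul_right (specNorm M))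
    (specNorm_pow_mul_mul_transpose_pow_le A M)

lemma sum_trace_le_trace_tsum (hA : specNorm A < 1) {M : Matrix n n ℝ} (hM : M.PosSemidef)
    (t : ℕ) :
    ∑ k ∈ Finset.range t, (A ^ k * M * Aᵀ ^ k).trace ≤ (∑' k : ℕ, A ^ k * M * Aᵀ ^ k).trace := by
  have hsum := (summable_pow_mul_mul_transpose_pow hA M).hasSum.map (traceAddMonoidHom n ℝ)
    (continuous_id.matrix_trace)
  change _ ≤ traceAddMonoidHom n ℝ _
  rw [← hsum.tsum_eq]
  refine hsum.summable.sum_le_tsum _ fun k _ => ?_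
  simpa [conjTranspose_eq_transpose_of_trivial, transpose_pow] using
    (hM.mul_mul_conjTranspose_same (A ^ k)).trace_nonneg

end Lyapunov

lemma Hmat_mul_kronecker_mul_transpose {nx nw : ℕ} (A : Matrix (Fin nx) (Fin nx) ℝ)
    (E : Matrix (Fin nx) (Fin nw) ℝ) (S : Matrix (Fin nw) (Fin nw) ℝ) (t : ℕ) :
    Hmat A E t * ((1 : Matrix (Fin t) (Fin t) ℝ) ⊗ₖ S) * (Hmat A E t)ᵀ =
      ∑ k ∈ Finset.range t, A ^ k * (E * S * Eᵀ) * Aᵀ ^ k := by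
  have block : ∀ k : ℕ, A ^ k * (E * S * Eᵀ) * Aᵀ ^ k = A ^ k * E * S * (A ^ k * E)ᵀ := by
    intro k
    simp only [transpose_mul, transpose_pow, Matrix.mul_assoc]
  simp_rw [block]
  rw [← Finset.sum_range_reflect,
    ← Fin.sum_univ_eq_sum_range fun k => A ^ (t - 1 - k) * E * S * (A ^ (t - 1 - k) * E)ᵀ]
  ext i j
  simp only [Matrix.mul_apply, Fintype.sum_prod_type, kroneckerMap_apply, one_apply, Hmat,
    of_apply, Matrix.sum_apply, transpose_apply, ite_mul, zero_mul, one_mul, mul_ite, mul_zero,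
    Finset.sum_mul]
  simp

lemma trace_Hmat_mul_kronecker_mul_transpose_le {nx nw : ℕ} {A : Matrix (Fin nx) (Fin nx) ℝ}
    (hA : specNorm A < 1) (E : Matrix (Fin nx) (Fin nw) ℝ) {S : Matrix (Fin nw) (Fin nw) ℝ}
    (hS : S.PosSemidef) (t : ℕ) :
    (Hmat A E t * ((1 : Matrix (Fin t) (Fin t) ℝ) ⊗ₖ S) * (Hmat A E t)ᵀ).trace ≤
      (∑' k : ℕ, A ^ k * (E * S * Eᵀ) * Aᵀ ^ k).trace := by
  rw [Hmat_mul_kronecker_mul_transpose, trace_sum]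
  refine sum_trace_le_trace_tsum hA ?_ t
  simpa [conjTranspose_eq_transpose_of_trivial] using hS.mul_mul_conjTranspose_same E

section SecondMoment

variable {ι m : Type*} [Fintype ι] [Fintype m] [DecidableEq ι] {S : Matrix ι ι ℝ}
  {P : Measure (EuclideanSpace ℝ ι)}

lemma norm_sq_toEuclideanLin (H : Matrix m ι ℝ) (ξ : EuclideanSpace ℝ ι) :
    ‖toEuclideanLin H ξ‖ ^ 2 = ∑ i, ∑ j, ∑ k, H i j * H i k * (ξ j * ξ k) := by
  rw [EuclideanSpace.norm_sq_eq]
  simp [toLpLin_apply, mulVec, dotProduct, sq, Finset.sum_mul_sum, mul_mul_mul_comm]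

lemma integrable_norm_sq_toEuclideanLin (hP : P ∈ MomentSet S) (H : Matrix m ι ℝ) :
    Integrable (fun ξ => ‖toEuclideanLin H ξ‖ ^ 2) P := by
  obtain ⟨-, -, -, hint, -⟩ := hP
  simp_rw [norm_sq_toEuclideanLin]
  exact integrable_finsetSum _ fun i _ => integrable_finsetSum _ fun j _ =>
    integrable_finsetSum _ fun k _ => (hint j k).const_mul _

lemma integral_norm_sq_toEuclideanLin (hP : P ∈ MomentSet S) (H : Matrix m ι ℝ) :
    ∫ ξ, ‖toEuclideanLin H ξ‖ ^ 2 ∂P = (H * S * Hᵀ).trace := by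
  obtain ⟨-, -, -, hint, hcov⟩ := hP
  simp_rw [norm_sq_toEuclideanLin]
  rw [integral_finsetSum _ fun i _ => integrable_finsetSum _ fun j _ =>
    integrable_finsetSum _ fun k _ => (hint j k).const_mul _]
  simp only [trace, diag, Matrix.mul_apply, transpose_apply, Finset.sum_mul]
  refine Finset.sum_congr rfl fun i _ => ?_
  rw [integral_finsetSum _ fun j _ => integrable_finsetSum _ fun k _ => (hint j k).const_mul _,
    Finset.sum_comm]
  refine Finset.sum_congr rfl fun j _ => ?_
  rw [integral_finsetSum _ fun k _ => (hint j k).const_mul _]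
  refine Finset.sum_congr rfl fun k _ => ?_
  rw [integral_const_mul, hcov]
  ring

end SecondMoment

lemma integral_le_CVaR_objective {Ω : Type*} [MeasurableSpace Ω] {P : Measure Ω}
    [IsProbabilityMeasure P] {L : Ω → ℝ} {ε : ℝ} (hε : 0 < ε) (hε1 : ε ≤ 1) (hL : Integrable L P)
    (β : ℝ) :
    ∫ ξ, L ξ ∂P ≤ β + ε⁻¹ * ∫ ξ, max (L ξ - β) 0 ∂P := by
  have hpos : 0 ≤ ∫ ξ, max (L ξ - β) 0 ∂P := integral_nonneg fun _ => le_max_right _ _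
  have hmono : ∫ ξ, L ξ ∂P - β ≤ ∫ ξ, max (L ξ - β) 0 ∂P := by
    have := integral_mono (hL.sub (integrable_const β)) (hL.sub (integrable_const β)).pos_part
      fun ξ => le_max_left (L ξ - β) 0
    simpa [integral_sub hL (integrable_const β)] using this
  have hinv : 1 ≤ ε⁻¹ := (one_le_inv₀ hε).mpr hε1
  nlinarith

lemma CVaR_le {ι : Type*} [Fintype ι] {P : Measure (EuclideanSpace ℝ ι)}
    [IsProbabilityMeasure P] {L : EuclideanSpace ℝ ι → ℝ} {ε : ℝ} (hε : 0 < ε) (hε1 : ε ≤ 1)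
    (hL : Integrable L P) (β : ℝ) :
    CVaR ε P L ≤ β + ε⁻¹ * ∫ ξ, max (L ξ - β) 0 ∂P :=
  ciInf_le ⟨_, Set.forall_mem_range.2 (integral_le_CVaR_objective hε hε1 hL)⟩ β

lemma wcCVaR_norm_sq_add_le {ι m : Type*} [Fintype ι] [Fintype m] [DecidableEq ι] {ε : ℝ}
    (hε : 0 < ε) (hε1 : ε ≤ 1) {S : Matrix ι ι ℝ} (hS : S.PosSemidef) (d : EuclideanSpace ℝ m)
    (H : Matrix m ι ℝ) {c K : ℝ} (hc : 0 ≤ c) (hK : 0 ≤ K)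
    (hbound : ∀ y, ‖d + y‖ ^ 2 ≤ c + K * ‖y‖ ^ 2) :
    wcCVaR ε S (fun ξ => ‖d + toEuclideanLin H ξ‖ ^ 2) ≤ c + K * ε⁻¹ * (H * S * Hᵀ).trace := by
  have htr : 0 ≤ (H * S * Hᵀ).trace := by
    simpa [conjTranspose_eq_transpose_of_trivial] using
      (hS.mul_mul_conjTranspose_same H).trace_nonneg
  refine Real.iSup_le (fun ⟨P, hP⟩ => ?_) (by positivity)
  have := hP.1
  have hHint := integrable_norm_sq_toEuclideanLin hP H
  have hL : Integrable (fun ξ => ‖d + toEuclideanLin H ξ‖ ^ 2) P := by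
    refine ((integrable_const c).add (hHint.const_mul K)).mono' ?_ (ae_of_all _ fun ξ => ?_)
    · exact (Continuous.aestronglyMeasurable (by fun_prop))
    · simpa using hbound (toEuclideanLin H ξ)
  calc CVaR ε P _ ≤ c + ε⁻¹ * ∫ ξ, max (‖d + toEuclideanLin H ξ‖ ^ 2 - c) 0 ∂P :=
        CVaR_le hε hε1 hL c
    _ ≤ c + ε⁻¹ * ∫ ξ, K * ‖toEuclideanLin H ξ‖ ^ 2 ∂P := by
        gcongr c + ε⁻¹ * ?_
        refine integral_mono (hL.sub (integrable_const c)).pos_part (hHint.const_mul K) fun ξ => ?_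
        exact max_le (by linarith [hbound (toEuclideanLin H ξ)]) (by positivity)
    _ = c + K * ε⁻¹ * (H * S * Hᵀ).trace := by
        rw [integral_const_mul, integral_norm_sq_toEuclideanLin hP]
        ring

lemma norm_add_sq_le_of_pos {F : Type*} [SeminormedAddCommGroup F] (x y : F) {s : ℝ}
    (hs : 0 < s) : ‖x + y‖ ^ 2 ≤ (1 + s) * ‖x‖ ^ 2 + (1 + 1 / s) * ‖y‖ ^ 2 := by
  have hxy : ‖x + y‖ ^ 2 ≤ (‖x‖ + ‖y‖) ^ 2 := by gcongr; exact norm_add_le x y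
  have hamgm : 2 * ‖x‖ * ‖y‖ ≤ s * ‖x‖ ^ 2 + 1 / s * ‖y‖ ^ 2 := by
    have := sq_nonneg (s * ‖x‖ - ‖y‖)
    have h := div_nonneg this hs.le
    field_simp at h ⊢
    nlinarith
  nlinarith

lemma norm_add_add_sq_le {F : Type*} [SeminormedAddCommGroup F] {a b : F} (y : F)
    {s₁ s₂ α β : ℝ} (hs₁ : 0 < s₁) (hs₂ : 0 < s₂) (ha : ‖a‖ ^ 2 ≤ α) (hb : ‖b‖ ^ 2 ≤ β) :
    ‖a + b + y‖ ^ 2 ≤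
      (1 + s₁) * α + (1 + 1 / s₁) * (1 + s₂) * β + (1 + 1 / s₁) * (1 + 1 / s₂) * ‖y‖ ^ 2 := by
  calc ‖a + b + y‖ ^ 2 ≤ (1 + s₁) * ‖a‖ ^ 2 + (1 + 1 / s₁) * ‖b + y‖ ^ 2 := by
        rw [add_assoc]
        exact norm_add_sq_le_of_pos _ _ hs₁
    _ ≤ (1 + s₁) * α + (1 + 1 / s₁) * ((1 + s₂) * β + (1 + 1 / s₂) * ‖y‖ ^ 2) := by
        gcongr
        exact (norm_add_sq_le_of_pos _ _ hs₂).trans (by gcongr)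
    _ = _ := by ring

lemma norm_sum_toEuclideanLin_pow_mul_le {m n : Type*} [Fintype m] [Fintype n] [DecidableEq m]
    [DecidableEq n] {A : Matrix m m ℝ} (hA : specNorm A < 1) (D : Matrix m n ℝ)
    (v : ℕ → EuclideanSpace ℝ n) (t : ℕ) {M : ℝ} (hM : 0 ≤ M) (hv : ∀ τ < t, ‖v τ‖ ≤ M) :
    ‖∑ k ∈ Finset.range t, toEuclideanLin (A ^ k * D) (v (t - 1 - k))‖ ≤
      specNorm D / (1 - specNorm A) * M := by
  have hA0 := specNorm_nonneg A
  have hD0 := specNorm_nonneg D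
  have hgeom : ∑ k ∈ Finset.range t, specNorm A ^ k ≤ 1 / (1 - specNorm A) := by
    have := geom_sum_Ico_le_of_lt_one (m := 0) (n := t) hA0 hA
    rwa [← Finset.range_eq_Ico, pow_zero] at this
  calc ‖∑ k ∈ Finset.range t, toEuclideanLin (A ^ k * D) (v (t - 1 - k))‖
      ≤ ∑ k ∈ Finset.range t, specNorm A ^ k * (specNorm D * M) := by
        refine (norm_sum_le _ _).trans (Finset.sum_le_sum fun k hk => ?_)
        have hk' : t - 1 - k < t := by have := Finset.mem_range.1 hk; omega
        calc _ ≤ specNorm (A ^ k * D) * ‖v (t - 1 - k)‖ := norm_toEuclideanLin_le _ _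
          _ ≤ specNorm A ^ k * specNorm D * M := by
              gcongr
              · exact (specNorm_mul_le _ _).trans (by gcongr; exact specNorm_pow_le A k)
              · exact hv _ hk'
          _ = specNorm A ^ k * (specNorm D * M) := mul_assoc _ _ _
    _ = (∑ k ∈ Finset.range t, specNorm A ^ k) * (specNorm D * M) := (Finset.sum_mul ..).symm
    _ ≤ 1 / (1 - specNorm A) * (specNorm D * M) := by gcongr
    _ = specNorm D / (1 - specNorm A) * M := by ring

lemma norm_sum_toEuclideanLin_pow_mul_sq_le {m n : Type*} [Fintype m] [Fintype n]
    [DecidableEq m] [DecidableEq n] {A : Matrix m m ℝ} (hA : specNorm A < 1) (D : Matrix m n ℝ)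
    (v : ℕ → EuclideanSpace ℝ n) (t : ℕ) {V : ℝ} (hV : 0 ≤ V) (hv : ∀ τ < t, ‖v τ‖ ^ 2 ≤ V) :
    ‖∑ k ∈ Finset.range t, toEuclideanLin (A ^ k * D) (v (t - 1 - k))‖ ^ 2 ≤
      (specNorm D / (1 - specNorm A)) ^ 2 * V := by
  rw [← Real.sq_sqrt hV, ← mul_pow]
  gcongr
  exact norm_sum_toEuclideanLin_pow_mul_le hA D v t (Real.sqrt_nonneg V)
    fun τ hτ => Real.le_sqrt_of_sq_le (hv τ hτ)

/-- explicit practical input-to-state stability bound for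
`x_{t+1} = A x_t + D v_t + E w_t`. -/
theorem stmt13 {nx nv nw : ℕ} (ε : ℝ) (hε : ε ∈ Set.Ioo (0 : ℝ) 1)
    (A : Matrix (Fin nx) (Fin nx) ℝ) (D : Matrix (Fin nx) (Fin nv) ℝ)
    (E : Matrix (Fin nx) (Fin nw) ℝ) (Sw : Matrix (Fin nw) (Fin nw) ℝ)
    (hA : specNorm A < 1) (hSw : Sw.PosSemidef) :
    ∀ α₁ α₂ : ℝ, 0 < α₁ → 0 < α₂ →
    ∀ x₀ : EuclideanSpace ℝ (Fin nx), ∀ v : ℕ → EuclideanSpace ℝ (Fin nv),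
    ∀ t : ℕ, (ht : 1 ≤ t) →
      wcCVaR ε ((1 : Matrix (Fin t) (Fin t) ℝ) ⊗ₖ Sw)
        (fun w => ‖Matrix.toEuclideanLin (A ^ t) x₀ +
          (∑ k ∈ Finset.range t, Matrix.toEuclideanLin (A ^ k * D) (v (t - 1 - k))) +
          Matrix.toEuclideanLin (Hmat A E t) w‖ ^ 2) ≤
      (1 + α₁ ^ 2) * specNorm A ^ (2 * t) * ‖x₀‖ ^ 2 +
        (1 + 1 / α₁ ^ 2) * (1 + α₂ ^ 2) * (specNorm D / (1 - specNorm A)) ^ 2 *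
          (Finset.range t).sup' (Finset.nonempty_range_iff.mpr (by omega))
            (fun τ => ‖v τ‖ ^ 2) +
        (1 + 1 / α₁ ^ 2) * (1 + 1 / α₂ ^ 2) * ε⁻¹ *
          Matrix.trace (∑' k : ℕ, A ^ k * (E * Sw * Eᵀ) * (Aᵀ) ^ k) := by
  obtain ⟨hε0, hε1⟩ := hε
  rintro α₁ α₂ hα₁ hα₂ x₀ v t ht
  set V := (Finset.range t).sup' (Finset.nonempty_range_iff.mpr (by omega)) fun τ => ‖v τ‖ ^ 2
  have hvV : ∀ τ < t, ‖v τ‖ ^ 2 ≤ V := fun τ hτ =>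
    Finset.le_sup' (fun τ => ‖v τ‖ ^ 2) (Finset.mem_range.2 hτ)
  have hV : 0 ≤ V := (sq_nonneg _).trans (hvV 0 ht)
  have hA0 := specNorm_nonneg A
  have hbound := fun y => norm_add_add_sq_le y (pow_pos hα₁ 2) (pow_pos hα₂ 2)
    (norm_toEuclideanLin_pow_sq_le A x₀ t) (norm_sum_toEuclideanLin_pow_mul_sq_le hA D v t hV hvV)
  have hcvar := wcCVaR_norm_sq_add_le hε0 hε1.le ((PosSemidef.one (n := Fin t)).kronecker hSw) _
    (Hmat A E t) (by positivity) (by positivity) hbound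
  have htr := trace_Hmat_mul_kronecker_mul_transpose_le hA E hSw t
  have hK : 0 ≤ (1 + 1 / α₁ ^ 2) * (1 + 1 / α₂ ^ 2) * ε⁻¹ := by positivity
  linarith [mul_le_mul_of_nonneg_left htr hK]
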